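/- arXiv:math/0611030 — 2 statements merged into one kernel-verified Lean document; each statement's English description precedes it below -/
import Mathlib

section
/- If a permutation σ ∈ 𝔖_n corresponds under the Schensted correspondence to a pair of standard Young tableaux of shape λ, then for every m, σ has an increasing subsequence of length m if and only if m ≤ λ₁; in particular, n ≤ λ₁ · k where k is the number of rows of λ, and every permutation in 𝔖_n with n > r·s contains either an increasing subsequence of length greater than r or the shape λ has more than s rows. -/
/-- Insert `x` into a row `r`: if some entry of `r` exceeds `x`, replace the
leftmost such entry `y` by `x` and return `(new row, some y)` (the bumped entry);
otherwise append `x` at the end of the row and return `(new row, none)`. -/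
def insertRow (r : List ℕ) (x : ℕ) : List ℕ × Option ℕ :=
  match r.findIdx? (fun y => x < y) with
  | none => (r ++ [x], none)
  | some j => (r.set j x, r[j]?)

/-- Schensted insertion of `x` into the insertion tableau `P` (a list of rows):
returns the new tableau together with the index of the row in which a new box
was created. -/
def insertTab : List (List ℕ) → ℕ → List (List ℕ) × ℕ
  | [], x => ([[x]], 0)
  | r :: rest, x =>
    match insertRow r x with
    | (r', none) => (r' :: rest, 0)
    | (r', some y) =>
      let p := insertTab rest y
      (r' :: p.1, p.2 + 1)

/-- Add a new box containing `k` at the end of row `i` of the recording tableau. -/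
def addBox (U : List (List ℕ)) (i k : ℕ) : List (List ℕ) :=
  if h : i < U.length then U.set i (U[i] ++ [k]) else U ++ [[k]]

/-- Run the Schensted correspondence on the remaining word, `k` being the label of
the current step, starting from the pair (insertion tableau, recording tableau). -/
def schenstedAux : List (List ℕ) × List (List ℕ) → ℕ → List ℕ →
    List (List ℕ) × List (List ℕ)
  | PQ, _, [] => PQ
  | (P, Q), k, x :: xs =>
    let p := insertTab P x
    schenstedAux (p.1, addBox Q p.2 k) (k + 1) xs

/-- The Schensted correspondence: the pair `(T, U)` of the insertion and recording
tableaux obtained by inserting the letters of the word `w` one at a time. -/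
def schensted (w : List ℕ) : List (List ℕ) × List (List ℕ) :=
  schenstedAux ([], []) 1 w

/-- The one-line word `σ(1), …, σ(n)` (with values in `{1, …, n}`) of a
permutation `σ ∈ 𝔖_n`. -/
def permWord {n : ℕ} (σ : Equiv.Perm (Fin n)) : List ℕ :=
  List.ofFn fun i => (σ i : ℕ) + 1

/-- The shape of a tableau given as a list of rows: the list of row lengths. -/
def shape (L : List (List ℕ)) : List ℕ := L.map List.length

/-- The entry of `L` in row `i` and column `j` (rows and columns indexed from 0),
defaulting to `0` outside the tableau. -/
def ent (L : List (List ℕ)) (i j : ℕ) : ℕ := (L.getD i []).getD j 0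

/-- `L` is a standard Young tableau, presented as its list of rows: row lengths
weakly decrease (so the shape is a Young diagram), rows are nonempty, entries
strictly increase along rows and down columns, and the multiset of entries is
exactly `{1, …, n}` where `n` is the number of boxes. -/
def IsSYTList (L : List (List ℕ)) : Prop :=
  (∀ r ∈ L, r ≠ []) ∧
  (∀ i : ℕ, (L.getD (i + 1) []).length ≤ (L.getD i []).length) ∧
  (∀ r ∈ L, r.Chain' (· < ·)) ∧
  (∀ i j : ℕ, j < (L.getD (i + 1) []).length → ent L i j < ent L (i + 1) j) ∧
  List.Perm L.flatten (List.range' 1 L.flatten.length)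


namespace Schen

def step (r : List ℕ) (x : ℕ) : List ℕ := (insertRow r x).1

lemma step_none {r : List ℕ} {x : ℕ} (h : r.findIdx? (fun y => x < y) = none) :
    step r x = r ++ [x] := by simp [step, insertRow, h]

lemma step_some {r : List ℕ} {x : ℕ} {j : ℕ} (h : r.findIdx? (fun y => x < y) = some j) :
    step r x = r.set j x := by simp [step, insertRow, h]

lemma none_le {r : List ℕ} {x : ℕ} (h : r.findIdx? (fun y => x < y) = none) :
    ∀ y ∈ r, y ≤ x := by
  intro y hy
  have := List.findIdx?_eq_none_iff.1 h y hy
  simpa using this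

lemma some_spec {r : List ℕ} {x : ℕ} {j : ℕ} (h : r.findIdx? (fun y => x < y) = some j) :
    ∃ hj : j < r.length, x < r[j] ∧ ∀ i (hi : i < r.length), i < j → r[i] ≤ x := by
  obtain ⟨hj, h1, h2⟩ := List.findIdx?_eq_some_iff_getElem.1 h
  refine ⟨hj, by simpa using h1, fun i hi hij => ?_⟩
  have := h2 i hij
  simpa using this

lemma sorted_le {r : List ℕ} (hs : r.Pairwise (· ≤ ·)) :
    ∀ (a b : ℕ) (ha : a < r.length) (hb : b < r.length), a ≤ b → r[a] ≤ r[b] := by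
  intro a b ha hb hab
  rcases Nat.eq_or_lt_of_le hab with rfl | hab
  · rfl
  · exact (List.pairwise_iff_getElem.1 hs) a b ha hb hab

lemma step_sorted {r : List ℕ} (hs : r.Pairwise (· ≤ ·)) (x : ℕ) :
    (step r x).Pairwise (· ≤ ·) := by
  rcases h : r.findIdx? (fun y => x < y) with _ | j
  · rw [step_none h, List.pairwise_append]
    exact ⟨hs, List.pairwise_singleton _ _, fun a ha b hb => by
      rw [List.mem_singleton.1 hb]; exact none_le h a ha⟩
  · obtain ⟨hj, hxj, hbef⟩ := some_spec h
    rw [step_some h, List.pairwise_iff_getElem]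
    intro i k hi hk hik
    simp only [List.length_set] at hi hk
    rw [List.getElem_set, List.getElem_set]
    by_cases hji : j = i
    · subst hji
      rw [if_pos rfl, if_neg (by omega)]
      exact le_trans hxj.le (sorted_le hs j k hj hk hik.le)
    · rw [if_neg hji]
      by_cases hjk : j = k
      · rw [if_pos hjk]
        exact hbef i hi (by omega)
      · rw [if_neg hjk]
        exact sorted_le hs i k hi hk hik.le

/-- lengths don't decrease, entries don't increase -/
lemma step_mono {r : List ℕ} (x : ℕ) :
    r.length ≤ (step r x).length ∧
      ∀ (p : ℕ) (hp : p < r.length) (hp' : p < (step r x).length), (step r x)[p] ≤ r[p] := by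
  rcases h : r.findIdx? (fun y => x < y) with _ | j
  · rw [step_none h]
    refine ⟨by simp, fun p hp hp' => ?_⟩
    rw [List.getElem_append_left hp]
  · obtain ⟨hj, hxj, _⟩ := some_spec h
    rw [step_some h]
    refine ⟨by simp, fun p hp hp' => ?_⟩
    rw [List.getElem_set]
    split
    · next hpj => subst hpj; exact hxj.le
    · rfl

/-- key placement bound: if all entries below index `j` are `< x`, then after the step
position `j` exists and holds a value `≤ x`. -/
lemma step_bound {r : List ℕ} {x : ℕ} {j : ℕ}
    (hbelow : ∀ (i : ℕ) (h : i < r.length), i < j → r[i] < x) (hj : j ≤ r.length) :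
    ∃ h : j < (step r x).length, (step r x)[j] ≤ x := by
  rcases h : r.findIdx? (fun y => x < y) with _ | j'
  · rw [step_none h]
    refine ⟨by simp; omega, ?_⟩
    rcases Nat.lt_or_ge j r.length with hlt | hge
    · rw [List.getElem_append_left hlt]
      exact none_le h _ (List.getElem_mem hlt)
    · have : j = r.length := le_antisymm hj hge
      subst this
      simp
  · obtain ⟨hj', hxj', hbef⟩ := some_spec h
    have hjj' : j ≤ j' := by
      by_contra hc
      push_neg at hc
      exact absurd (hbelow j' hj' hc) (by omega)
    rw [step_some h]
    refine ⟨by simp; omega, ?_⟩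
    rw [List.getElem_set]
    split
    · next => rfl
    · next hne => exact hbef j (by omega) (by omega)


def pat (w : List ℕ) : List ℕ := w.foldl step []

lemma pat_append (w : List ℕ) (x : ℕ) : pat (w ++ [x]) = step (pat w) x := by
  simp [pat, List.foldl_append]

lemma pat_sorted (w : List ℕ) : (pat w).Pairwise (· ≤ ·) := by
  induction w using List.reverseRecOn with
  | nil => simp [pat]
  | append_singleton w x ih => rw [pat_append]; exact step_sorted ih x

lemma pat_subset (w : List ℕ) : ∀ a ∈ pat w, a ∈ w := by
  induction w using List.reverseRecOn with
  | nil => simp [pat]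
  | append_singleton w x ih =>
    rw [pat_append]
    intro a ha
    rcases h : (pat w).findIdx? (fun y => x < y) with _ | j
    · rw [step_none h] at ha
      rcases List.mem_append.1 ha with h1 | h1
      · exact List.mem_append.2 (Or.inl (ih a h1))
      · simp at h1; simp [h1]
    · rw [step_some h] at ha
      rcases List.mem_or_eq_of_mem_set ha with h1 | h1
      · exact List.mem_append.2 (Or.inl (ih a h1))
      · simp [h1]

/-- Lower bound: any strictly increasing sublist is dominated by the patience row. -/
lemma patA : ∀ (w l : List ℕ), l.Sublist w → l.Pairwise (· < ·) →
    ∀ (j : ℕ) (hj : j < l.length), ∃ hj' : j < (pat w).length, (pat w)[j] ≤ l[j] := by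
  intro w
  induction w using List.reverseRecOn with
  | nil =>
    intro l hl _ j hj
    rw [List.sublist_nil.1 hl] at hj; simp at hj
  | append_singleton w x ih =>
    intro l hl hp j hj
    rw [pat_append]
    obtain ⟨l₁, l₂, rfl, h1, h2⟩ := List.sublist_append_iff.1 hl
    rcases List.sublist_singleton.1 h2 with rfl | rfl
    · -- l = l₁ ++ [] : doesn't use x
      simp only [List.append_nil] at hj hp ⊢
      obtain ⟨hj', hle⟩ := ih l₁ h1 hp j hj
      obtain ⟨hlen, hmono⟩ := step_mono (r := pat w) x
      exact ⟨lt_of_lt_of_le hj' hlen, le_trans (hmono j hj' (lt_of_lt_of_le hj' hlen)) hle⟩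
    · -- l = l₁ ++ [x]
      simp only [List.length_append, List.length_singleton] at hj
      rcases Nat.lt_or_ge j l₁.length with hlt | hge
      · -- j within l₁
        obtain ⟨hj', hle⟩ := ih l₁ h1 (hp.sublist (List.sublist_append_left l₁ [x])) j hlt
        obtain ⟨hlen, hmono⟩ := step_mono (r := pat w) x
        refine ⟨lt_of_lt_of_le hj' hlen, ?_⟩
        rw [List.getElem_append_left hlt]
        exact le_trans (hmono j hj' (lt_of_lt_of_le hj' hlen)) hle
      · -- j = l₁.length, l[j] = x
        have hjeq : j = l₁.length := by omega
        subst hjeq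
        have hgetx : (l₁ ++ [x])[l₁.length]'(by simp) = x := by
          simp
        rw [hgetx]
        have hall : ∀ a ∈ l₁, a < x := by
          have := List.pairwise_append.1 hp
          exact fun a ha => this.2.2 a ha x (List.mem_singleton_self x)
        -- below entries of pat w at indices < j are < x
        have hbelow : ∀ (i : ℕ) (h : i < (pat w).length), i < l₁.length → (pat w)[i] < x := by
          intro i hi hij
          obtain ⟨hj', hle⟩ := ih l₁ h1 (hp.sublist (List.sublist_append_left l₁ [x]))
            (l₁.length - 1) (by omega)
          have hsort := sorted_le (pat_sorted w) i (l₁.length - 1) hi hj' (by omega)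
          have : l₁[l₁.length - 1]'(by omega) < x := hall _ (List.getElem_mem _)
          omega
        have hjlen : l₁.length ≤ (pat w).length := by
          rcases Nat.eq_zero_or_pos l₁.length with h0 | h0
          · omega
          · obtain ⟨hj', _⟩ := ih l₁ h1 (hp.sublist (List.sublist_append_left l₁ [x]))
              (l₁.length - 1) (by omega)
            omega
        exact step_bound hbelow hjlen

/-- Upper bound: every entry of the patience row is the last element of a strictly
increasing sublist of that length. -/
lemma patB : ∀ (w : List ℕ), w.Nodup → ∀ (j : ℕ) (hj : j < (pat w).length),
    ∃ l : List ℕ, l.Sublist w ∧ l.Pairwise (· < ·) ∧ l.length = j + 1 ∧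
      ∃ h : j < l.length, l[j] = (pat w)[j] := by
  intro w
  induction w using List.reverseRecOn with
  | nil => intro _ j hj; simp [pat] at hj
  | append_singleton w x ih =>
    intro hnd j hj
    have hndw : w.Nodup := (List.nodup_append.1 hnd).1
    have hxw : x ∉ w := by
      have := (List.nodup_append.1 hnd).2.2
      intro hc
      exact this x hc x (List.mem_singleton_self x) rfl
    have hxpat : x ∉ pat w := fun hc => hxw (pat_subset w x hc)
    simp only [pat_append] at hj ⊢
    -- helper to extend a realizing sublist ending below x
    have hext : ∀ (p : ℕ) (hp : p + 1 ≤ (pat w).length), (pat w)[p]'(by omega) < x →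
        ∃ l : List ℕ, l.Sublist (w ++ [x]) ∧ l.Pairwise (· < ·) ∧ l.length = p + 2 ∧
          ∃ h : p + 1 < l.length, l[p+1] = x := by
      intro p hp hplt
      obtain ⟨l, hsub, hpw, hlen, hlt, hval⟩ := ih hndw p (by omega)
      refine ⟨l ++ [x], hsub.append (List.Sublist.refl _), ?_, by simp [hlen],
        by simp only [List.length_append, hlen, List.length_singleton]; omega, ?_⟩
      · rw [List.pairwise_append]
        refine ⟨hpw, List.pairwise_singleton _ _, fun a ha b hb => ?_⟩
        rw [List.mem_singleton.1 hb]
        obtain ⟨i, hi, rfl⟩ := List.mem_iff_getElem.1 ha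
        have : l[i] ≤ l[p]'hlt := sorted_le (hpw.imp le_of_lt) i p hi hlt (by omega)
        omega
      · rw [List.getElem_append_right (by omega)]
        simp [hlen]
    rcases h : (pat w).findIdx? (fun y => x < y) with _ | j'
    · simp only [step_none h] at hj ⊢
      simp only [List.length_append, List.length_singleton] at hj
      rcases Nat.lt_or_ge j (pat w).length with hlt | hge
      · obtain ⟨l, hsub, hpw, hlen, hlt', hval⟩ := ih hndw j hlt
        exact ⟨l, hsub.trans (List.sublist_append_left _ _), hpw, hlen,
          hlt', by rw [hval, List.getElem_append_left hlt]⟩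
      · have hjeq : j = (pat w).length := by omega
        have hvx : ((pat w) ++ [x])[j]'(by simp; omega) = x := by
          rw [List.getElem_append_right (by omega)]
          simp [hjeq]
        rcases Nat.eq_zero_or_pos j with h0 | h0
        · subst h0
          exact ⟨[x], (List.nil_sublist w).append (List.Sublist.refl _),
            List.pairwise_singleton _ _, rfl, by simp, by simpa using hvx.symm⟩
        · obtain ⟨p, rfl⟩ : ∃ p, j = p + 1 := ⟨j - 1, by omega⟩
          have hmem : (pat w)[p]'(by omega) ∈ pat w := List.getElem_mem (by omega)
          have hvlt : (pat w)[p]'(by omega) < x := by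
            have hle := none_le h _ hmem
            have hne : (pat w)[p]'(by omega) ≠ x := fun hc => hxpat (hc ▸ hmem)
            omega
          obtain ⟨l, h1, h2, h3, h4, h5⟩ := hext p (by omega) hvlt
          exact ⟨l, h1, h2, h3, h4, h5.trans hvx.symm⟩
    · obtain ⟨hj', hxj', hbef⟩ := some_spec h
      simp only [step_some h] at hj ⊢
      simp only [List.length_set] at hj
      by_cases hjj : j = j'
      · subst hjj
        have hvx : ((pat w).set j x)[j]'(by simpa using hj) = x := by
          rw [List.getElem_set, if_pos rfl]
        rcases Nat.eq_zero_or_pos j with h0 | h0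
        · subst h0
          exact ⟨[x], (List.nil_sublist w).append (List.Sublist.refl _),
            List.pairwise_singleton _ _, rfl, by simp, by simpa using hvx.symm⟩
        · obtain ⟨p, rfl⟩ : ∃ p, j = p + 1 := ⟨j - 1, by omega⟩
          have hmem : (pat w)[p]'(by omega) ∈ pat w := List.getElem_mem (by omega)
          have hvlt : (pat w)[p]'(by omega) < x := by
            have hle := hbef p (by omega) (by omega)
            have hne : (pat w)[p]'(by omega) ≠ x := fun hc => hxpat (hc ▸ hmem)
            omega
          obtain ⟨l, h1, h2, h3, h4, h5⟩ := hext p (by omega) hvlt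
          exact ⟨l, h1, h2, h3, h4, h5.trans hvx.symm⟩
      · obtain ⟨l, hsub, hpw, hlen, hlt', hval⟩ := ih hndw j hj
        refine ⟨l, hsub.trans (List.sublist_append_left _ _), hpw, hlen, hlt', ?_⟩
        rw [hval, List.getElem_set, if_neg (fun hc => hjj hc.symm)]


def TabRec : List (List ℕ) → Prop
  | [] => True
  | r :: rest => r.Pairwise (· < ·) ∧ r ≠ [] ∧
      (rest.headD []).length ≤ r.length ∧
      (∀ (j : ℕ) (hj : j < (rest.headD []).length) (hj' : j < r.length),
        r[j] < (rest.headD [])[j]) ∧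
      TabRec rest

lemma TabRec_nil : TabRec [] := trivial

lemma TabRec_cons {r : List ℕ} {rest : List (List ℕ)} : TabRec (r :: rest) ↔
    (r.Pairwise (· < ·) ∧ r ≠ [] ∧
      (rest.headD []).length ≤ r.length ∧
      (∀ (j : ℕ) (hj : j < (rest.headD []).length) (hj' : j < r.length),
        r[j] < (rest.headD [])[j]) ∧
      TabRec rest) := Iff.rfl

def tstep (T : List (List ℕ)) (x : ℕ) : List (List ℕ) := (insertTab T x).1

/-- the strict-sortedness of a bumped row -/
lemma set_pairwise_lt {r : List ℕ} {x j : ℕ} (hr : r.Pairwise (· < ·)) (hxr : x ∉ r)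
    (hj : j < r.length) (hxj : x < r[j]) (hbef : ∀ (i : ℕ) (hi : i < r.length), i < j → r[i] ≤ x) :
    (r.set j x).Pairwise (· < ·) := by
  rw [List.pairwise_iff_getElem]
  intro i k hi hk hik
  simp only [List.length_set] at hi hk
  rw [List.getElem_set, List.getElem_set]
  have hslt : ∀ (a b : ℕ) (ha : a < r.length) (hb : b < r.length), a < b → r[a] < r[b] :=
    fun a b ha hb hab => (List.pairwise_iff_getElem.1 hr) a b ha hb hab
  by_cases hji : j = i
  · subst hji
    rw [if_pos rfl, if_neg (by omega)]
    exact lt_of_lt_of_le hxj (hslt j k hj hk hik).le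
  · rw [if_neg hji]
    by_cases hjk : j = k
    · rw [if_pos hjk]
      have h1 := hbef i hi (by omega)
      have h2 : r[i] ≠ x := fun hc => hxr (hc ▸ List.getElem_mem hi)
      omega
    · rw [if_neg hjk]
      exact hslt i k hi hk hik

lemma insertTab_spec : ∀ (T : List (List ℕ)) (x : ℕ),
    TabRec T → T.flatten.Nodup → x ∉ T.flatten →
    TabRec (tstep T x) ∧ (tstep T x).flatten.Perm (x :: T.flatten) ∧
    (tstep T x).headD [] = step (T.headD []) x
  | [], x, _, _, _ => by
    refine ⟨?_, by simp [tstep, insertTab], ?_⟩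
    · refine TabRec_cons.2 ⟨List.pairwise_singleton _ _, by simp, by simp, by simp, TabRec_nil⟩
    · simp only [tstep, insertTab]
      rw [step_none (by simp)]
      simp
  | r :: rest, x, hT, hnd, hx => by
    obtain ⟨hr, hrne, hlen, hcol, hrest⟩ := TabRec_cons.1 hT
    simp only [List.flatten_cons] at hnd hx
    have hxr : x ∉ r := fun hc => hx (List.mem_append.2 (Or.inl hc))
    have hxrest : x ∉ rest.flatten := fun hc => hx (List.mem_append.2 (Or.inr hc))
    obtain ⟨hndr, hndrest, hdisj⟩ := List.nodup_append.1 hnd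
    rcases h : r.findIdx? (fun y => x < y) with _ | j
    · -- append to first row
      have htstep : tstep (r :: rest) x = (r ++ [x]) :: rest := by
        simp [tstep, insertTab, insertRow, h]
      rw [htstep]
      refine ⟨?_, ?_, ?_⟩
      · refine TabRec_cons.2 ⟨?_, by simp, by rw [List.length_append]; omega, ?_, hrest⟩
        · rw [List.pairwise_append]
          refine ⟨hr, List.pairwise_singleton _ _, fun a ha b hb => ?_⟩
          rw [List.mem_singleton.1 hb]
          have h1 := none_le h a ha
          have h2 : a ≠ x := fun hc => hxr (hc ▸ ha)
          omega
        · intro p hp hp'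
          rw [List.getElem_append_left (by omega)]
          exact hcol p hp (by omega)
      · simp only [List.flatten_cons]
        have p1 : ((r ++ [x]) ++ rest.flatten).Perm ((x :: r) ++ rest.flatten) :=
          (List.perm_append_singleton x r).append_right _
        simpa using p1
      · simp [step_none h]
    · -- bump
      obtain ⟨hj, hxj, hbef⟩ := some_spec h
      set y := r[j] with hy
      have hyr : y ∈ r := List.getElem_mem hj
      have hyrest : y ∉ rest.flatten := fun hc => hdisj y hyr y hc rfl
      obtain ⟨IH1, IH2, IH3⟩ := insertTab_spec rest y hrest hndrest hyrest
      have htstep : tstep (r :: rest) x = (r.set j x) :: (insertTab rest y).1 := by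
        simp [tstep, insertTab, insertRow, h, List.getElem?_eq_getElem hj]
        rfl
      rw [htstep]
      set rest' := (insertTab rest y).1 with hrest'
      have hR1 : rest'.headD [] = step (rest.headD []) y := IH3
      set R1 := rest.headD [] with hR1def
      refine ⟨?_, ?_, by simp [step_some h]⟩
      · -- TabRec
        have hsetne : r.set j x ≠ [] := by
          intro hc
          have h0 : (r.set j x).length = 0 := by rw [hc]; rfl
          rw [List.length_set] at h0
          omega
        refine TabRec_cons.2 ⟨set_pairwise_lt hr hxr hj hxj (fun i hi hij => hbef i hi hij),
          hsetne, ?_, ?_, IH1⟩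
        · -- length interface
          rw [hR1]
          rcases h2 : R1.findIdx? (fun z => y < z) with _ | j'
          · rw [step_none h2]
            have hjge : R1.length ≤ j := by
              by_contra hc
              push_neg at hc
              have h3 := hcol j hc hj
              have h4 := none_le h2 _ (List.getElem_mem hc)
              omega
            simp only [List.length_append, List.length_set, List.length_singleton]
            omega
          · obtain ⟨hj', _, _⟩ := some_spec h2
            rw [step_some h2]
            simp only [List.length_set]
            omega
        · -- column interface
          rw [hR1]
          rcases h2 : R1.findIdx? (fun z => y < z) with _ | j'
          · rw [step_none h2]
            have hjge : R1.length ≤ j := by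
              by_contra hc
              push_neg at hc
              have h3 := hcol j hc hj
              have h4 := none_le h2 _ (List.getElem_mem hc)
              omega
            intro p hp hp'
            simp only [List.length_append, List.length_singleton] at hp
            rcases Nat.lt_or_ge p R1.length with hplt | hpge
            · rw [List.getElem_set, if_neg (by omega), List.getElem_append_left hplt]
              exact hcol p hplt (by omega)
            · have hpeq : p = R1.length := by omega
              rw [List.getElem_set]
              have hgy : (R1 ++ [y])[p]'(by simpa using hp) = y := by
                rw [List.getElem_append_right (by omega)]
                simp [hpeq]
              rw [hgy]
              split
              · next hjp => exact hxj
              · next hjp =>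
                exact (List.pairwise_iff_getElem.1 hr) p j (by omega) hj (by omega)
          · obtain ⟨hj', hyj', hbef2⟩ := some_spec h2
            rw [step_some h2]
            have hj'le : j' ≤ j := by
              by_contra hc
              push_neg at hc
              have h3 := hcol j (by omega) hj
              have h4 := hbef2 j (by omega) hc
              omega
            intro p hp hp'
            simp only [List.length_set] at hp hp'
            rw [List.getElem_set, List.getElem_set]
            by_cases hpj' : j' = p
            · subst hpj'
              rw [if_pos rfl]
              by_cases hpj : j = j'
              · rw [if_pos hpj]; exact hxj
              · rw [if_neg hpj]
                exact (List.pairwise_iff_getElem.1 hr) j' j (by omega) hj (by omega)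
            · rw [if_neg hpj']
              by_cases hpj : j = p
              · rw [if_pos hpj]
                subst hpj
                have h3 := hcol j hp hj
                omega
              · rw [if_neg hpj]
                exact hcol p hp (by omega)
      · -- permutation of entries
        have hkey : (y :: r.set j x).Perm (x :: r) := by
          have hset : r.set j x = r.take j ++ x :: r.drop (j + 1) := by
            rw [List.set_eq_take_append_cons_drop, if_pos hj]
          have hre : r.take j ++ y :: r.drop (j + 1) = r := by
            rw [← List.drop_eq_getElem_cons hj, List.take_append_drop]
          rw [hset]
          refine (List.Perm.cons y List.perm_middle).trans ?_
          refine (List.Perm.swap x y _).trans ?_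
          refine (List.Perm.cons x List.perm_middle.symm).trans ?_
          rw [hre]
        simp only [List.flatten_cons]
        have p1 : (r.set j x ++ rest'.flatten).Perm (r.set j x ++ (y :: rest.flatten)) :=
          IH2.append_left _
        have p2 : (r.set j x ++ (y :: rest.flatten)).Perm (y :: (r.set j x ++ rest.flatten)) :=
          List.perm_middle
        have p3 : ((y :: r.set j x) ++ rest.flatten).Perm ((x :: r) ++ rest.flatten) :=
          hkey.append_right _
        exact p1.trans (p2.trans (by simpa using p3))


def tabs (w : List ℕ) : List (List ℕ) := w.foldl tstep []

lemma tabs_append (w : List ℕ) (x : ℕ) : tabs (w ++ [x]) = tstep (tabs w) x := by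
  simp [tabs, List.foldl_append]

lemma tabs_spec (w : List ℕ) (hnd : w.Nodup) :
    TabRec (tabs w) ∧ (tabs w).flatten.Perm w ∧ (tabs w).headD [] = pat w := by
  induction w using List.reverseRecOn with
  | nil => exact ⟨TabRec_nil, by simp [tabs], by simp [tabs, pat]⟩
  | append_singleton w x ih =>
    have hndw : w.Nodup := (List.nodup_append.1 hnd).1
    have hxw : x ∉ w := fun hc => (List.nodup_append.1 hnd).2.2 x hc x (List.mem_singleton_self x) rfl
    obtain ⟨hT, hperm, hhead⟩ := ih hndw
    have hndfl : (tabs w).flatten.Nodup := hperm.nodup_iff.2 hndw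
    have hxfl : x ∉ (tabs w).flatten := fun hc => hxw (hperm.mem_iff.1 hc)
    obtain ⟨h1, h2, h3⟩ := insertTab_spec (tabs w) x hT hndfl hxfl
    rw [tabs_append]
    refine ⟨h1, ?_, by rw [h3, hhead, pat_append]⟩
    exact h2.trans ((hperm.cons x).trans (List.perm_append_singleton x w).symm)

lemma TabRec_row_le : ∀ (L : List (List ℕ)), TabRec L →
    ∀ r ∈ L, r.length ≤ (L.headD []).length
  | [], _, r, hr => absurd hr List.not_mem_nil
  | a :: rest, hT, r, hr => by
    obtain ⟨_, _, hlen, _, hrest⟩ := TabRec_cons.1 hT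
    rcases List.mem_cons.1 hr with rfl | hr'
    · simp
    · have := TabRec_row_le rest hrest r hr'
      have h2 : (rest.headD []).length ≤ a.length := hlen
      simp only [List.headD_cons]
      rcases rest with _ | ⟨b, t⟩
      · exact absurd hr' List.not_mem_nil
      · exact le_trans this h2


lemma schenstedAux_fst : ∀ (w : List ℕ) (P Q : List (List ℕ)) (k : ℕ),
    (schenstedAux (P, Q) k w).1 = w.foldl tstep P
  | [], P, Q, k => rfl
  | x :: xs, P, Q, k => by
    simp only [schenstedAux, List.foldl_cons]
    exact schenstedAux_fst xs _ _ _

lemma schensted_fst (w : List ℕ) : (schensted w).1 = tabs w :=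
  schenstedAux_fst w [] [] 1

section Perm

variable {n : ℕ} (σ : Equiv.Perm (Fin n))

lemma permWord_length : (permWord σ).length = n := by simp [permWord]

lemma permWord_nodup : (permWord σ).Nodup := by
  rw [permWord, List.nodup_ofFn]
  intro a b hab
  simp only [add_left_inj] at hab
  exact σ.injective (Fin.val_injective hab)

lemma permWord_getElem (i : ℕ) (h : i < (permWord σ).length) :
    (permWord σ)[i] = (σ ⟨i, by simpa [permWord] using h⟩ : ℕ) + 1 := by
  simp [permWord]

/-- conversion between increasing subsequences of `σ` and strictly increasing
sublists of the one-line word. -/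
lemma incr_iff (m : ℕ) :
    (∃ s : Fin m → Fin n, StrictMono s ∧ StrictMono fun k => σ (s k)) ↔
      ∃ l : List ℕ, l.Sublist (permWord σ) ∧ l.Pairwise (· < ·) ∧ l.length = m := by
  have hwn : (permWord σ).length = n := permWord_length σ
  constructor
  · rintro ⟨s, hs, hσs⟩
    have hb : ∀ k : Fin m, (s k : ℕ) < (permWord σ).length := fun k => by rw [hwn]; exact (s k).isLt
    refine ⟨(List.ofFn (fun k : Fin m =>
        (⟨(s k : ℕ), hb k⟩ : Fin (permWord σ).length))).map (permWord σ).get,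
      List.map_getElem_sublist ?_, ?_, by simp⟩
    · rw [List.pairwise_ofFn]
      intro i j hij
      exact hs hij
    · rw [List.map_ofFn, List.pairwise_ofFn]
      intro i j hij
      simp only [Function.comp_apply, List.get_eq_getElem]
      rw [permWord_getElem σ _ (hb i), permWord_getElem σ _ (hb j)]
      simp only [Fin.eta]
      exact Nat.succ_lt_succ (hσs hij)
  · rintro ⟨l, hsub, hpw, hlen⟩
    obtain ⟨f, hf⟩ := List.sublist_iff_exists_fin_orderEmbedding_get_eq.1 hsub
    have hfb : ∀ k : Fin m, ((f (Fin.cast hlen.symm k)) : ℕ) < n := fun k => by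
      exact lt_of_lt_of_le (f (Fin.cast hlen.symm k)).isLt (le_of_eq hwn)
    refine ⟨fun k => ⟨(f (Fin.cast hlen.symm k) : ℕ), hfb k⟩, ?_, ?_⟩
    · intro a b hab
      have h1 : f (Fin.cast hlen.symm a) < f (Fin.cast hlen.symm b) :=
        f.strictMono hab
      exact h1
    · intro a b hab
      have hlget : ∀ k : Fin m,
          l.get (Fin.cast hlen.symm k) =
            ((σ ⟨(f (Fin.cast hlen.symm k) : ℕ), hfb k⟩ : Fin n) : ℕ) + 1 := by
        intro k
        have h0 := hf (Fin.cast hlen.symm k)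
        rw [List.get_eq_getElem (l := permWord σ),
          permWord_getElem σ _ (f (Fin.cast hlen.symm k)).isLt] at h0
        exact h0
      have hmono : l.get (Fin.cast hlen.symm a) < l.get (Fin.cast hlen.symm b) := by
        rw [List.get_eq_getElem, List.get_eq_getElem]
        exact (List.pairwise_iff_getElem.1 hpw) _ _ (by omega) (by omega) hab
      rw [hlget a, hlget b] at hmono
      exact Nat.lt_of_succ_lt_succ hmono

end Perm

end Schen

/-- If `σ ∈ 𝔖_n` corresponds under the Schensted correspondence to a pair of
standard Young tableaux of shape `λ`, then: `σ` has an increasing subsequence of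
length `m` iff `m ≤ λ₁`; in particular `n ≤ λ₁ · k` where `k` is the number of
rows of `λ`; and if `n > r · s` then `σ` has an increasing subsequence of length
greater than `r` or `λ` has more than `s` rows. -/
theorem schensted_increasing_subsequences (n : ℕ) (σ : Equiv.Perm (Fin n))
    (lam : List ℕ) (hlam : lam = shape (schensted (permWord σ)).1) :
    (∀ m : ℕ,
      (∃ s : Fin m → Fin n, StrictMono s ∧ StrictMono fun k => σ (s k)) ↔
        m ≤ lam.headD 0) ∧
    n ≤ lam.headD 0 * lam.length ∧
    (∀ r s : ℕ, n > r * s →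
      (∃ t : Fin (r + 1) → Fin n, StrictMono t ∧ StrictMono fun k => σ (t k)) ∨
        lam.length > s)  := by
  subst hlam
  have hnd := Schen.permWord_nodup σ
  have hwn := Schen.permWord_length σ
  obtain ⟨hT, hperm, hhead⟩ := Schen.tabs_spec (permWord σ) hnd
  rw [Schen.schensted_fst]
  have hlam1 : (shape (Schen.tabs (permWord σ))).headD 0
      = (Schen.pat (permWord σ)).length := by
    rcases htb : Schen.tabs (permWord σ) with _ | ⟨a, t⟩
    · rw [htb] at hhead
      simp only [List.headD_nil] at hhead
      simp [shape, ← hhead]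
    · rw [htb] at hhead
      simp only [List.headD_cons] at hhead
      simp [shape, hhead]
  have key : ∀ m : ℕ,
      (∃ s : Fin m → Fin n, StrictMono s ∧ StrictMono fun k => σ (s k)) ↔
        m ≤ (Schen.pat (permWord σ)).length := by
    intro m
    rw [Schen.incr_iff]
    constructor
    · rintro ⟨l, hsub, hpw, hlen⟩
      rcases Nat.eq_zero_or_pos m with rfl | hm
      · omega
      · obtain ⟨h1, -⟩ := Schen.patA (permWord σ) l hsub hpw (m - 1) (by omega)
        omega
    · intro hm
      rcases Nat.eq_zero_or_pos m with rfl | hm0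
      · exact ⟨[], List.nil_sublist _, List.Pairwise.nil, rfl⟩
      · obtain ⟨l, h1, h2, h3, -⟩ := Schen.patB (permWord σ) hnd (m - 1) (by omega)
        exact ⟨l, h1, h2, by omega⟩
  have hbound : n ≤ (Schen.pat (permWord σ)).length
      * (shape (Schen.tabs (permWord σ))).length := by
    have h1 : ((Schen.tabs (permWord σ)).map List.length).sum = n := by
      rw [← List.length_flatten, hperm.length_eq, hwn]
    have h2 : ∀ a ∈ (Schen.tabs (permWord σ)).map List.length,
        a ≤ (Schen.pat (permWord σ)).length := by
      intro a ha
      obtain ⟨r, hr, rfl⟩ := List.mem_map.1 ha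
      have h3 := Schen.TabRec_row_le _ hT r hr
      rw [hhead] at h3
      exact h3
    have h3 := List.sum_le_card_nsmul _ _ h2
    rw [smul_eq_mul, h1] at h3
    calc n ≤ ((Schen.tabs (permWord σ)).map List.length).length
          * (Schen.pat (permWord σ)).length := h3
      _ = (Schen.pat (permWord σ)).length * (shape (Schen.tabs (permWord σ))).length := by
          rw [Nat.mul_comm]; rfl
  refine ⟨fun m => (key m).trans (by rw [hlam1]), by rw [hlam1]; exact hbound, ?_⟩
  intro r s hrs
  rcases Nat.lt_or_ge ((shape (Schen.tabs (permWord σ))).headD 0) (r + 1) with hlt | hge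
  · right
    have h1 : (Schen.pat (permWord σ)).length ≤ r := by omega
    have h2 : n ≤ r * (shape (Schen.tabs (permWord σ))).length :=
      le_trans hbound (Nat.mul_le_mul_right _ h1)
    have h3 : r * s < r * (shape (Schen.tabs (permWord σ))).length := by omega
    exact Nat.lt_of_mul_lt_mul_left h3
  · left
    exact (key (r + 1)).2 (by omega)
end

section
/- Stability of Littlewood-Richardson coefficients: For partitions λ, μ, ν, the coefficient C_{λ,μ}^ν obtained from the expansion s_λ(x₁,…,x_N)·s_μ(x₁,…,x_N) = Σ_ν C_{λ,μ}^ν s_ν(x₁,…,x_N) does not depend on N, provided N is at least the number of parts of each of λ, μ, and ν; moreover C_{λ,μ}^ν = 0 unless |ν| = |λ| + |μ|. -/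
open MvPolynomial

/-- Semistandardness of a filling of the boxes of `μ` with entries in `Fin N`
(the value `v : Fin N` encodes the entry `v + 1 ∈ {1, …, N}`): entries weakly
increase along each row and strictly increase down each column. -/
def IsSSYT (μ : YoungDiagram) {N : ℕ} (T : μ.cells → Fin N) : Prop :=
  (∀ c d : μ.cells, (c : ℕ × ℕ).1 = (d : ℕ × ℕ).1 → (c : ℕ × ℕ).2 ≤ (d : ℕ × ℕ).2 →
      T c ≤ T d) ∧
  (∀ c d : μ.cells, (c : ℕ × ℕ).2 = (d : ℕ × ℕ).2 → (c : ℕ × ℕ).1 < (d : ℕ × ℕ).1 →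
      T c < T d)

/-- The number of entries of `T` equal to `i + 1` (i.e. the number of `(i+1)`'s
in the tableau encoded by `T`). -/
def wt (μ : YoungDiagram) {N : ℕ} (T : μ.cells → Fin N) (i : Fin N) : ℕ :=
  (Finset.univ.filter fun c => T c = i).card

open Classical in
/-- The Schur polynomial `s_μ(x₁, …, x_N)`: the generating series `∑_T x^T` over
all semistandard Young tableaux `T` of shape `μ` with entries in `{1, …, N}`,
where `x^T = ∏ᵢ xᵢ^(number of i's in T)`. -/
noncomputable def schur (μ : YoungDiagram) (N : ℕ) : MvPolynomial (Fin N) ℚ :=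
  ∑ T ∈ Finset.univ.filter (fun T : μ.cells → Fin N => IsSSYT μ T),
    ∏ i : Fin N, X i ^ wt μ T i

namespace LRaux

open scoped Classical

variable {μ ν : YoungDiagram} {N : ℕ}

lemma cell_mem (c : μ.cells) : ((c : ℕ × ℕ).1, (c : ℕ × ℕ).2) ∈ μ := by
  have := c.2
  simpa [YoungDiagram.mem_cells] using this

lemma cell_fst_lt_colLen (c : μ.cells) : (c : ℕ × ℕ).1 < μ.colLen 0 := by
  have h : ((c : ℕ × ℕ).1, (0:ℕ)) ∈ μ :=
    μ.up_left_mem le_rfl (Nat.zero_le _) (cell_mem c)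
  exact YoungDiagram.mem_iff_lt_colLen.mp h

lemma fst_le_entry {T : μ.cells → Fin N} (hT : IsSSYT μ T) :
    ∀ (r : ℕ) (c : μ.cells), (c : ℕ × ℕ).1 = r → r ≤ (T c : ℕ) := by
  intro r
  induction r with
  | zero => exact fun c _ => Nat.zero_le _
  | succ r ih =>
    intro c hc
    have hmem : ((r, (c : ℕ × ℕ).2)) ∈ μ :=
      μ.up_left_mem (by omega) le_rfl (cell_mem c)
    set d : μ.cells := ⟨(r, (c : ℕ × ℕ).2), by simpa [YoungDiagram.mem_cells] using hmem⟩
    have hlt : T d < T c := hT.2 d c rfl (by simp [d]; omega)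
    have h2 : r ≤ (T d : ℕ) := ih d rfl
    have : (T d : ℕ) < (T c : ℕ) := hlt
    omega

lemma fst_le_entry' {T : μ.cells → Fin N} (hT : IsSSYT μ T) (c : μ.cells) :
    (c : ℕ × ℕ).1 ≤ (T c : ℕ) :=
  fst_le_entry hT _ c rfl

lemma card_entry_lt (T : μ.cells → Fin N) (k : ℕ) :
    (Finset.univ.filter fun c : μ.cells => (T c : ℕ) < k).card
      = ∑ i ∈ Finset.univ.filter (fun i : Fin N => (i : ℕ) < k), wt μ T i := by
  rw [Finset.card_eq_sum_card_fiberwise (f := T)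
      (t := Finset.univ.filter (fun i : Fin N => (i : ℕ) < k))
      (fun c hc => by simpa using (Finset.mem_filter.mp hc).2)]
  refine Finset.sum_congr rfl fun i hi => ?_
  rw [Finset.mem_filter] at hi
  unfold wt
  congr 1
  ext c
  simp only [Finset.mem_filter, Finset.mem_univ, true_and]
  constructor
  · rintro ⟨_, h⟩; exact h
  · rintro h; exact ⟨h ▸ hi.2, h⟩

lemma card_fst_eq (i : ℕ) :
    (Finset.univ.filter fun c : μ.cells => (c : ℕ × ℕ).1 = i).card = μ.rowLen i := by
  rw [μ.rowLen_eq_card, YoungDiagram.row]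
  rw [Finset.univ_eq_attach]
  rw [Finset.filter_attach (fun c : ℕ × ℕ => c.1 = i) μ.cells]
  simp

lemma card_fst_lt (k : ℕ) :
    (Finset.univ.filter fun c : μ.cells => (c : ℕ × ℕ).1 < k).card
      = ∑ i ∈ Finset.range k, μ.rowLen i := by
  rw [Finset.card_eq_sum_card_fiberwise (f := fun c : μ.cells => (c : ℕ × ℕ).1)
      (t := Finset.range k)
      (fun c hc => by simpa using (Finset.mem_filter.mp hc).2)]
  refine Finset.sum_congr rfl fun i hi => ?_
  rw [Finset.mem_range] at hi
  rw [← card_fst_eq (μ := μ) i]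
  congr 1
  ext c
  simp only [Finset.mem_filter, Finset.mem_univ, true_and]
  exact ⟨fun ⟨_, h⟩ => h, fun h => ⟨h ▸ hi, h⟩⟩

lemma rowLen_eq_zero {i : ℕ} (h : ν.colLen 0 ≤ i) : ν.rowLen i = 0 := by
  by_contra hne
  have : (i, 0) ∈ ν := YoungDiagram.mem_iff_lt_rowLen.mpr (Nat.pos_of_ne_zero hne)
  have := YoungDiagram.mem_iff_lt_colLen.mp this
  omega

lemma sum_fin_lt (f : ℕ → ℕ) (k : ℕ) :
    ∑ i ∈ Finset.univ.filter (fun i : Fin N => (i : ℕ) < k), f (i : ℕ)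
      = ∑ i ∈ Finset.range (min k N), f i := by
  rw [← Finset.sum_attach (Finset.range (min k N)) f]
  refine Finset.sum_bij (fun i hi => ⟨(i : ℕ), by
      simp only [Finset.mem_filter, Finset.mem_univ, true_and] at hi
      simp only [Finset.mem_range]; omega⟩) ?_ ?_ ?_ ?_
  · intro a ha; exact Finset.mem_attach _ _
  · intro a ha b hb h
    apply Fin.ext
    simpa [Subtype.ext_iff] using h
  · intro b _
    have hb := b.2
    simp only [Finset.mem_range] at hb
    refine ⟨⟨(b : ℕ), by omega⟩, by simp; omega, rfl⟩
  · intro a ha; rfl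

lemma sum_wt (T : μ.cells → Fin N) : ∑ i : Fin N, wt μ T i = μ.card := by
  have h := card_entry_lt (μ := μ) T N
  have h1 : (Finset.univ.filter fun c : μ.cells => (T c : ℕ) < N) = Finset.univ :=
    Finset.filter_true_of_mem fun c _ => (T c).2
  have h2 : (Finset.univ.filter (fun i : Fin N => (i : ℕ) < N)) = Finset.univ :=
    Finset.filter_true_of_mem fun i _ => i.2
  rw [h1, h2] at h
  rw [← h, Finset.univ_eq_attach, Finset.card_attach]

noncomputable def wtF (μ : YoungDiagram) {N : ℕ} (T : μ.cells → Fin N) : Fin N →₀ ℕ :=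
  Finsupp.equivFunOnFinite.symm (wt μ T)

lemma wtF_apply (T : μ.cells → Fin N) (i : Fin N) : wtF μ T i = wt μ T i := rfl

lemma prod_X_pow_eq (d : Fin N →₀ ℕ) :
    (∏ i : Fin N, (X i : MvPolynomial (Fin N) ℚ) ^ d i) = monomial d 1 := by
  rw [← MvPolynomial.prod_X_pow_eq_monomial]
  exact (Finset.prod_subset (Finset.subset_univ _) (fun x _ hx => by
    simp only [Finsupp.mem_support_iff, not_not] at hx
    simp [hx])).symm

lemma schur_eq_sum_monomial (μ : YoungDiagram) (N : ℕ) :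
    schur μ N = ∑ T ∈ Finset.univ.filter (fun T : μ.cells → Fin N => IsSSYT μ T),
      monomial (wtF μ T) (1 : ℚ) := by
  unfold schur
  refine Finset.sum_congr (by congr) fun T _ => ?_
  rw [← prod_X_pow_eq (wtF μ T)]
  rfl

lemma coeff_schur (μ : YoungDiagram) (N : ℕ) (d : Fin N →₀ ℕ) :
    coeff d (schur μ N)
      = ((Finset.univ.filter (fun T : μ.cells → Fin N => IsSSYT μ T ∧ wtF μ T = d)).card : ℚ) := by
  rw [schur_eq_sum_monomial, coeff_sum]
  simp only [coeff_monomial]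
  rw [Finset.sum_boole]
  rw [Finset.filter_filter]

noncomputable def dvec (ν : YoungDiagram) (N : ℕ) : Fin N →₀ ℕ :=
  Finsupp.equivFunOnFinite.symm (fun i => ν.rowLen i)

lemma dvec_apply (ν : YoungDiagram) (N : ℕ) (i : Fin N) : dvec ν N i = ν.rowLen i := rfl

lemma wtF_eq_dvec_iff {T : μ.cells → Fin N} :
    wtF μ T = dvec ν N ↔ ∀ i : Fin N, wt μ T i = ν.rowLen i := by
  constructor
  · intro h i
    have := congrArg (fun f => f i) h
    simpa [wtF_apply, dvec_apply] using this
  · intro h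
    ext i
    rw [wtF_apply, dvec_apply]
    exact h i

lemma sum_range_rowLen_min (hν : ν.colLen 0 ≤ N) (k : ℕ) :
    ∑ i ∈ Finset.range k, ν.rowLen i = ∑ i ∈ Finset.range (min k N), ν.rowLen i := by
  symm
  apply Finset.sum_subset
  · exact Finset.range_subset_range.mpr (Nat.min_le_left _ _)
  · intro i hi hni
    simp only [Finset.mem_range] at hi hni
    exact rowLen_eq_zero (by omega)

lemma card_entry_lt_eq {T : μ.cells → Fin N}
    (hw : ∀ i : Fin N, wt μ T i = ν.rowLen i) (hν : ν.colLen 0 ≤ N) (k : ℕ) :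
    (Finset.univ.filter fun c : μ.cells => (T c : ℕ) < k).card
      = ∑ i ∈ Finset.range k, ν.rowLen i := by
  rw [card_entry_lt, sum_range_rowLen_min hν k, ← sum_fin_lt (f := ν.rowLen) k]
  exact Finset.sum_congr rfl fun i _ => hw i

lemma dominance {T : μ.cells → Fin N} (hT : IsSSYT μ T)
    (hw : ∀ i : Fin N, wt μ T i = ν.rowLen i) (hν : ν.colLen 0 ≤ N) (k : ℕ) :
    ∑ i ∈ Finset.range k, ν.rowLen i ≤ ∑ i ∈ Finset.range k, μ.rowLen i := by
  rw [← card_entry_lt_eq hw hν k, ← card_fst_lt (μ := μ) k]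
  apply Finset.card_le_card
  intro c hc
  simp only [Finset.mem_filter, Finset.mem_univ, true_and] at hc ⊢
  exact lt_of_le_of_lt (fst_le_entry' hT c) hc

/-- the canonical tableau of shape `ν`, row `i` filled with entry `i` -/
def T0 (ν : YoungDiagram) (N : ℕ) (hν : ν.colLen 0 ≤ N) : ν.cells → Fin N :=
  fun c => ⟨(c : ℕ × ℕ).1, lt_of_lt_of_le (cell_fst_lt_colLen c) hν⟩

lemma T0_isSSYT (hν : ν.colLen 0 ≤ N) : IsSSYT ν (T0 ν N hν) := by
  constructor
  · intro c d h _; simp [T0, Fin.le_def, h]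
  · intro c d _ h; simpa [T0, Fin.lt_def] using h

lemma T0_wt (hν : ν.colLen 0 ≤ N) (i : Fin N) : wt ν (T0 ν N hν) i = ν.rowLen i := by
  rw [← card_fst_eq (μ := ν) (i : ℕ)]
  unfold wt
  congr 1
  ext c
  simp [T0, Fin.ext_iff]

lemma eq_T0 {T : ν.cells → Fin N} (hT : IsSSYT ν T)
    (hw : ∀ i : Fin N, wt ν T i = ν.rowLen i) (hν : ν.colLen 0 ≤ N) :
    T = T0 ν N hν := by
  have key : ∀ k : ℕ, k ≤ N →
      (Finset.univ.filter fun c : ν.cells => ((c : ℕ × ℕ).1 : ℕ) < k)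
        = (Finset.univ.filter fun c : ν.cells => (T c : ℕ) < k) := by
    intro k hk
    symm
    apply Finset.eq_of_subset_of_card_le
    · intro c hc
      simp only [Finset.mem_filter, Finset.mem_univ, true_and] at hc ⊢
      exact lt_of_le_of_lt (fst_le_entry' hT c) hc
    · rw [card_fst_lt, card_entry_lt_eq hw hν k]
  funext c
  have hk : (c : ℕ × ℕ).1 + 1 ≤ N := lt_of_lt_of_le (cell_fst_lt_colLen c) hν
  have hc : c ∈ (Finset.univ.filter
      fun d : ν.cells => ((d : ℕ × ℕ).1 : ℕ) < (c : ℕ × ℕ).1 + 1) := by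
    simp
  rw [key _ hk] at hc
  simp only [Finset.mem_filter, Finset.mem_univ, true_and] at hc
  have h2 := fst_le_entry' hT c
  apply Fin.ext
  simp only [T0]
  omega

lemma coeff_dvec_schur_self (hν : ν.colLen 0 ≤ N) :
    coeff (dvec ν N) (schur ν N) = 1 := by
  rw [coeff_schur]
  have : (Finset.univ.filter
      (fun T : ν.cells → Fin N => IsSSYT ν T ∧ wtF ν T = dvec ν N)) = {T0 ν N hν} := by
    ext T
    simp only [Finset.mem_filter, Finset.mem_univ, true_and, Finset.mem_singleton]
    constructor
    · rintro ⟨h1, h2⟩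
      exact eq_T0 h1 (wtF_eq_dvec_iff.mp h2) hν
    · rintro rfl
      exact ⟨T0_isSSYT hν, wtF_eq_dvec_iff.mpr (T0_wt hν)⟩
  rw [this]
  simp

noncomputable def rowF (ν : YoungDiagram) : ℕ →₀ ℕ :=
  Finsupp.onFinset (Finset.range (ν.colLen 0)) (fun i => ν.rowLen i)
    (fun i hi => Finset.mem_range.mpr (by
      by_contra h
      push_neg at h
      exact hi (rowLen_eq_zero h)))

lemma rowF_apply (ν : YoungDiagram) (i : ℕ) : rowF ν i = ν.rowLen i := rfl

lemma rowF_injective : Function.Injective rowF := by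
  intro μ ν h
  have h' : ∀ i, μ.rowLen i = ν.rowLen i := fun i => by
    have := congrArg (fun f => f i) h
    simpa [rowF_apply] using this
  ext ⟨i, j⟩
  rw [YoungDiagram.mem_cells, YoungDiagram.mem_cells,
    YoungDiagram.mem_iff_lt_rowLen, YoungDiagram.mem_iff_lt_rowLen, h' i]

lemma lex_le_of_SSYT {T : μ.cells → Fin N} (hT : IsSSYT μ T)
    (hw : ∀ i : Fin N, wt μ T i = ν.rowLen i) (hν : ν.colLen 0 ≤ N) :
    toLex (rowF ν) ≤ toLex (rowF μ) := by
  rcases eq_or_ne (rowF ν) (rowF μ) with h | h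
  · exact le_of_eq (congrArg toLex h)
  have hex : ∃ j, ν.rowLen j ≠ μ.rowLen j := by
    by_contra hc
    push_neg at hc
    exact h (Finsupp.ext hc)
  set j := Nat.find hex with hjdef
  have hj : ν.rowLen j ≠ μ.rowLen j := Nat.find_spec hex
  have hpre : ∀ i, i < j → ν.rowLen i = μ.rowLen i := fun i hi =>
    not_not.mp (Nat.find_min hex hi)
  have hd := dominance hT hw hν (j + 1)
  have hsum : ∑ i ∈ Finset.range j, ν.rowLen i = ∑ i ∈ Finset.range j, μ.rowLen i :=
    Finset.sum_congr rfl fun i hi => hpre i (Finset.mem_range.mp hi)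
  rw [Finset.sum_range_succ, Finset.sum_range_succ, hsum] at hd
  have hlt : ν.rowLen j < μ.rowLen j := by omega
  exact le_of_lt (Finsupp.Lex.lt_iff.mpr ⟨j, fun i hi => hpre i hi, hlt⟩)

lemma schur_linindep (N : ℕ) (C : YoungDiagram →₀ ℚ)
    (hsupp : ∀ ν ∈ C.support, ν.colLen 0 ≤ N)
    (h : (C.sum fun ν c => c • schur ν N) = 0) : C = 0 := by
  by_contra hC
  obtain ⟨ν, hν, hmax⟩ := Finset.exists_max_image C.support (fun ν => toLex (rowF ν))
      (Finsupp.support_nonempty_iff.mpr hC)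
  have hcoeff := congrArg (coeff (dvec ν N)) h
  rw [Finsupp.sum, coeff_sum, coeff_zero] at hcoeff
  simp only [coeff_smul] at hcoeff
  rw [Finset.sum_eq_single ν ?h1 ?h2] at hcoeff
  · rw [coeff_dvec_schur_self (hsupp ν hν)] at hcoeff
    simp only [smul_eq_mul, mul_one] at hcoeff
    exact (Finsupp.mem_support_iff.mp hν) hcoeff
  case h1 =>
    intro μ hμ hne
    suffices hz : coeff (dvec ν N) (schur μ N) = 0 by rw [hz, smul_zero]
    rw [coeff_schur]
    suffices hz : (Finset.univ.filter
        (fun T : μ.cells → Fin N => IsSSYT μ T ∧ wtF μ T = dvec ν N)) = ∅ by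
      rw [hz]; simp
    rw [Finset.filter_eq_empty_iff]
    rintro T _ ⟨h1, h2⟩
    have hle := lex_le_of_SSYT h1 (wtF_eq_dvec_iff.mp h2) (hsupp ν hν)
    have heq : rowF ν = rowF μ := toLex.injective (le_antisymm hle (hmax μ hμ))
    exact hne (rowF_injective heq).symm
  case h2 =>
    intro hns
    exact absurd hν hns

lemma schur_eq_zero (h : N < ν.colLen 0) : schur ν N = 0 := by
  rw [schur_eq_sum_monomial]
  suffices hz : (Finset.univ.filter (fun T : ν.cells → Fin N => IsSSYT ν T)) = ∅ by
    rw [hz]; simp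
  rw [Finset.filter_eq_empty_iff]
  intro T _ hT
  have hc : ((N : ℕ), (0 : ℕ)) ∈ ν := YoungDiagram.mem_iff_lt_colLen.mpr h
  set c : ν.cells := ⟨(N, 0), by simpa [YoungDiagram.mem_cells] using hc⟩
  have h1 : N ≤ (T c : ℕ) := fst_le_entry hT N c rfl
  have h2 : (T c : ℕ) < N := (T c).2
  omega

lemma schur_isHomogeneous (ν : YoungDiagram) (N : ℕ) :
    (schur ν N).IsHomogeneous ν.card := by
  rw [schur_eq_sum_monomial]
  apply MvPolynomial.IsHomogeneous.sum
  intro T _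
  apply isHomogeneous_monomial
  rw [Finsupp.degree_apply]
  rw [Finset.sum_subset (Finset.subset_univ _)
    (fun x _ hx => by simpa using hx)]
  exact sum_wt T

noncomputable def specMap (M N : ℕ) : MvPolynomial (Fin N) ℚ →ₐ[ℚ] MvPolynomial (Fin M) ℚ :=
  aeval (fun i : Fin N => if h2 : (i : ℕ) < M then X ⟨(i : ℕ), h2⟩ else 0)

lemma specMap_X (M N : ℕ) (i : Fin N) :
    specMap M N (X i) = if h2 : (i : ℕ) < M then X ⟨(i : ℕ), h2⟩ else 0 := by
  simp [specMap]

lemma wt_eq_zero_of_lt {T : μ.cells → Fin N} {M : ℕ}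
    (hM : ∀ c, (T c : ℕ) < M) {i : Fin N} (hi : ¬ (i : ℕ) < M) : wt μ T i = 0 := by
  unfold wt
  rw [Finset.card_eq_zero, Finset.filter_eq_empty_iff]
  intro c _ hc
  exact hi (hc ▸ hM c)

lemma specMap_schur (M N : ℕ) (h : M ≤ N) (ν : YoungDiagram) :
    specMap M N (schur ν N) = schur ν M := by
  unfold schur
  rw [map_sum]
  have hterm : ∀ T : ν.cells → Fin N,
      specMap M N (∏ i : Fin N, X i ^ wt ν T i)
        = ∏ i : Fin N, (if h2 : (i : ℕ) < M then (X ⟨(i : ℕ), h2⟩ : MvPolynomial (Fin M) ℚ)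
            else 0) ^ wt ν T i := by
    intro T
    rw [map_prod]
    exact Finset.prod_congr rfl fun i _ => by rw [map_pow, specMap_X]
  -- restrict to tableaux with all entries < M
  rw [← Finset.sum_filter_add_sum_filter_not
      (Finset.univ.filter (fun T : ν.cells → Fin N => IsSSYT ν T))
      (fun T => ∀ c, (T c : ℕ) < M)]
  have hz : ∀ T ∈ (Finset.univ.filter (fun T : ν.cells → Fin N => IsSSYT ν T)).filter
      (fun T => ¬ ∀ c, (T c : ℕ) < M),
      specMap M N (∏ i : Fin N, X i ^ wt ν T i) = 0 := by
    intro T hT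
    rw [Finset.mem_filter] at hT
    push_neg at hT
    obtain ⟨c, hc⟩ := hT.2
    rw [hterm]
    apply Finset.prod_eq_zero (Finset.mem_univ (T c))
    rw [dif_neg (by omega)]
    apply zero_pow
    unfold wt
    rw [Finset.card_ne_zero]
    exact ⟨c, by simp⟩
  rw [Finset.sum_congr rfl hz, Finset.sum_const_zero, add_zero]
  -- now the main bijection
  refine Finset.sum_bij'
    (i := fun T hT => fun c : ν.cells => (⟨(T c : ℕ), by
      rw [Finset.mem_filter, Finset.mem_filter] at hT
      exact hT.2 c⟩ : Fin M))
    (j := fun T' _ => fun c : ν.cells => Fin.castLE h (T' c))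
    ?_ ?_ ?_ ?_ ?_
  · intro T hT
    rw [Finset.mem_filter, Finset.mem_filter] at hT
    obtain ⟨⟨_, hssyt⟩, _⟩ := hT
    rw [Finset.mem_filter]
    refine ⟨Finset.mem_univ _, ?_, ?_⟩
    · intro c d h1 h2
      have := hssyt.1 c d h1 h2
      exact Fin.mk_le_mk.mpr (Fin.le_def.mp this)
    · intro c d h1 h2
      have := hssyt.2 c d h1 h2
      exact Fin.mk_lt_mk.mpr (Fin.lt_def.mp this)
  · intro T' hT'
    rw [Finset.mem_filter] at hT'
    rw [Finset.mem_filter, Finset.mem_filter]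
    refine ⟨⟨Finset.mem_univ _, ?_, ?_⟩, fun c => (T' c).2⟩
    · intro c d h1 h2
      have := hT'.2.1 c d h1 h2
      exact Fin.le_def.mpr (Fin.le_def.mp this)
    · intro c d h1 h2
      have := hT'.2.2 c d h1 h2
      exact Fin.lt_def.mpr (Fin.lt_def.mp this)
  · intro T hT
    funext c
    apply Fin.ext
    rfl
  · intro T' hT'
    funext c
    apply Fin.ext
    rfl
  · intro T hT
    rw [Finset.mem_filter, Finset.mem_filter] at hT
    rw [hterm]
    -- LHS product over Fin N; drop the factors with i ≥ M
    rw [← Finset.prod_subset (Finset.subset_univ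
        (Finset.univ.filter (fun i : Fin N => (i : ℕ) < M)))
        (fun i _ hi => by
          simp [wt_eq_zero_of_lt hT.2 (i := i) (by simpa using hi)])]
    refine Finset.prod_bij'
      (i := fun i hi => (⟨(i : ℕ), by simpa using hi⟩ : Fin M))
      (j := fun i' _ => Fin.castLE h i')
      ?_ ?_ ?_ ?_ ?_
    · intro i _; exact Finset.mem_univ _
    · intro i' _; simp
    · intro i hi; apply Fin.ext; rfl
    · intro i' _; apply Fin.ext; rfl
    · intro i hi
      rw [Finset.mem_filter] at hi
      rw [dif_pos (by simpa using hi.2)]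
      congr 1
      unfold wt
      congr 1
      ext c
      simp only [Finset.mem_filter, Finset.mem_univ, true_and]
      rw [Fin.ext_iff, Fin.ext_iff]

lemma sum_schur_filter (N : ℕ) (C : YoungDiagram →₀ ℚ) (P : YoungDiagram → Prop)
    [DecidablePred P] (hP : ∀ ν, ¬ P ν → schur ν N = 0) :
    (C.sum fun ν c => c • schur ν N) = ((C.filter P).sum fun ν c => c • schur ν N) := by
  rw [Finsupp.sum, Finsupp.sum, Finsupp.support_filter]
  rw [Finset.sum_congr rfl (fun ν hν => by
    rw [Finsupp.filter_apply_pos P C (Finset.mem_filter.mp hν).2] :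
      ∀ ν ∈ C.support.filter P, (C.filter P) ν • schur ν N = C ν • schur ν N)]
  refine (Finset.sum_filter_of_ne ?_).symm
  intro ν _ hne
  by_contra hP'
  exact hne (by rw [hP ν hP', smul_zero])

lemma eq_coeffs {N₁ N₂ : ℕ} (h12 : N₁ ≤ N₂) (lam mu : YoungDiagram)
    (C₁ : YoungDiagram →₀ ℚ) (hsupp₁ : ∀ ν ∈ C₁.support, ν.colLen 0 ≤ N₁)
    (hC₁ : schur lam N₁ * schur mu N₁ = C₁.sum fun ν c => c • schur ν N₁)
    (C₂ : YoungDiagram →₀ ℚ)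
    (hC₂ : schur lam N₂ * schur mu N₂ = C₂.sum fun ν c => c • schur ν N₂)
    (nu : YoungDiagram) (hnu : nu.colLen 0 ≤ N₁) :
    C₁ nu = C₂ nu := by
  have hmap := congrArg (specMap N₁ N₂) hC₂
  rw [map_mul, specMap_schur N₁ N₂ h12, specMap_schur N₁ N₂ h12, hC₁] at hmap
  have hr : specMap N₁ N₂ (C₂.sum fun ν c => c • schur ν N₂)
      = C₂.sum fun ν c => c • schur ν N₁ := by
    rw [Finsupp.sum, Finsupp.sum, map_sum]
    exact Finset.sum_congr rfl fun ν _ => by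
      rw [map_smul, specMap_schur N₁ N₂ h12]
  rw [hr] at hmap
  have hPz : ∀ ν : YoungDiagram, ¬ ν.colLen 0 ≤ N₁ → schur ν N₁ = 0 := fun ν hν =>
    schur_eq_zero (by omega)
  rw [sum_schur_filter N₁ C₂ (fun ν => ν.colLen 0 ≤ N₁) hPz] at hmap
  have hDsum : (((C₁ - C₂.filter (fun ν => ν.colLen 0 ≤ N₁)) :
      YoungDiagram →₀ ℚ).sum fun ν c => c • schur ν N₁) = 0 := by
    rw [Finsupp.sum_sub_index (fun ν c₁ c₂ => sub_smul c₁ c₂ _), hmap, sub_self]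
  have hDsupp : ∀ ν ∈ ((C₁ - C₂.filter (fun ν => ν.colLen 0 ≤ N₁)) :
      YoungDiagram →₀ ℚ).support, ν.colLen 0 ≤ N₁ := by
    intro ν hν
    have h' := Finsupp.support_sub hν
    rw [Finset.mem_union] at h'
    rcases h' with h' | h'
    · exact hsupp₁ ν h'
    · rw [Finsupp.support_filter, Finset.mem_filter] at h'
      exact h'.2
  have hD0 := schur_linindep N₁ _ hDsupp hDsum
  have h2 := congrArg (fun f : YoungDiagram →₀ ℚ => f nu) hD0
  simp only [Finsupp.sub_apply, Finsupp.coe_zero, Pi.zero_apply] at h2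
  rw [Finsupp.filter_apply_pos _ C₂ hnu] at h2
  exact sub_eq_zero.mp h2

lemma coeff_zero_of_card_ne (N : ℕ) (lam mu : YoungDiagram)
    (C : YoungDiagram →₀ ℚ) (hsupp : ∀ ν ∈ C.support, ν.colLen 0 ≤ N)
    (hC : schur lam N * schur mu N = C.sum fun ν c => c • schur ν N)
    (nu : YoungDiagram) (hne : nu.card ≠ lam.card + mu.card) : C nu = 0 := by
  by_cases hnu : nu.colLen 0 ≤ N
  · have hL : (schur lam N * schur mu N).IsHomogeneous (lam.card + mu.card) :=
      (schur_isHomogeneous lam N).mul (schur_isHomogeneous mu N)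
    have h0 : homogeneousComponent nu.card (schur lam N * schur mu N) = 0 := by
      rw [homogeneousComponent_of_mem ((mem_homogeneousSubmodule _ _).mpr hL), if_neg hne]
    have hcomp := congrArg (homogeneousComponent nu.card) hC
    rw [h0] at hcomp
    have hr : homogeneousComponent nu.card (C.sum fun ν c => c • schur ν N)
        = (C.filter (fun ν => ν.card = nu.card)).sum fun ν c => c • schur ν N := by
      rw [Finsupp.sum, map_sum]
      rw [Finset.sum_congr rfl (fun ν _ => by
        rw [map_smul, homogeneousComponent_of_mem
          ((mem_homogeneousSubmodule _ _).mpr (schur_isHomogeneous ν N))] :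
            ∀ ν ∈ C.support, (homogeneousComponent nu.card) (C ν • schur ν N)
              = C ν • (if nu.card = ν.card then schur ν N else 0))]
      rw [Finsupp.sum, Finsupp.support_filter]
      rw [Finset.sum_congr rfl (fun ν hν => by
        rw [Finsupp.filter_apply_pos _ C (Finset.mem_filter.mp hν).2] :
          ∀ ν ∈ C.support.filter (fun ν => ν.card = nu.card),
            (C.filter (fun ν => ν.card = nu.card)) ν • schur ν N = C ν • schur ν N)]
      rw [← Finset.sum_filter_of_ne
        (f := fun ν => C ν • (if nu.card = ν.card then schur ν N else 0))
        (p := fun ν => ν.card = nu.card) (by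
          intro ν _ hne'
          by_contra hp
          apply hne'
          show C ν • (if nu.card = ν.card then schur ν N else 0) = 0
          rw [if_neg (fun hh => hp hh.symm), smul_zero])]
      refine Finset.sum_congr rfl fun ν hν => ?_
      rw [if_pos ((Finset.mem_filter.mp hν).2).symm]
    rw [hr] at hcomp
    have hsupp' : ∀ ν ∈ (C.filter (fun ν => ν.card = nu.card)).support, ν.colLen 0 ≤ N := by
      intro ν hν
      rw [Finsupp.support_filter, Finset.mem_filter] at hν
      exact hsupp ν hν.1
    have hD := schur_linindep N _ hsupp' hcomp.symm
    have h2 := congrArg (fun f : YoungDiagram →₀ ℚ => f nu) hD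
    simp only [Finsupp.coe_zero, Pi.zero_apply] at h2
    rwa [Finsupp.filter_apply_pos (fun ν : YoungDiagram => ν.card = nu.card) C rfl] at h2
  · by_contra hne'
    exact hnu (hsupp nu (Finsupp.mem_support_iff.mpr hne'))

end LRaux

/-- **Stability of Littlewood–Richardson coefficients**: the coefficient
`C_{λ,μ}^ν` in the expansion `s_λ · s_μ = ∑_ν C_{λ,μ}^ν s_ν` does not depend on
the number `N` of variables, provided `N` is at least the number of parts of each
of `λ`, `μ`, `ν`; moreover `C_{λ,μ}^ν = 0` unless `|ν| = |λ| + |μ|`. -/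
theorem lr_coefficients_stable (N₁ N₂ : ℕ) (hN₁ : 0 < N₁) (hN₂ : 0 < N₂)
    (lam mu : YoungDiagram)
    (hlam₁ : lam.colLen 0 ≤ N₁) (hmu₁ : mu.colLen 0 ≤ N₁)
    (hlam₂ : lam.colLen 0 ≤ N₂) (hmu₂ : mu.colLen 0 ≤ N₂)
    (C₁ : YoungDiagram →₀ ℚ) (hsupp₁ : ∀ ν ∈ C₁.support, ν.colLen 0 ≤ N₁)
    (hC₁ : schur lam N₁ * schur mu N₁ = C₁.sum fun ν c => c • schur ν N₁)
    (C₂ : YoungDiagram →₀ ℚ) (hsupp₂ : ∀ ν ∈ C₂.support, ν.colLen 0 ≤ N₂)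
    (hC₂ : schur lam N₂ * schur mu N₂ = C₂.sum fun ν c => c • schur ν N₂) :
    (∀ nu : YoungDiagram, nu.colLen 0 ≤ N₁ → nu.colLen 0 ≤ N₂ → C₁ nu = C₂ nu) ∧
    (∀ nu : YoungDiagram, nu.card ≠ lam.card + mu.card → C₁ nu = 0) := by
  constructor
  · intro nu h1 h2
    rcases le_total N₁ N₂ with h12 | h21
    · exact LRaux.eq_coeffs h12 lam mu C₁ hsupp₁ hC₁ C₂ hC₂ nu h1
    · exact (LRaux.eq_coeffs h21 lam mu C₂ hsupp₂ hC₂ C₁ hC₁ nu h2).symm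
  · intro nu hne
    exact LRaux.coeff_zero_of_card_ne N₁ lam mu C₁ hsupp₁ hC₁ nu hne
end
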